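/- arXiv:1808.04007 — 4 statements merged into one kernel-verified Lean document; each statement's English description precedes it below -/
import Mathlib

section
/- In the ring U^n, for any four distinct indices i, j, k, ℓ the elements v_{abc} := u_{ab} + u_{bc} + u_{ca} satisfy the three-term cyclic relation v_{ijℓ}·v_{jkℓ} + v_{jkℓ}·v_{kiℓ} + v_{kiℓ}·v_{ijℓ} = 0. -/
open MvPolynomial

noncomputable def uVar {n : ℕ} (i j : Fin n) (h : i ≠ j) :
    MvPolynomial {p : Fin n × Fin n // p.1 ≠ p.2} ℚ :=
  X ⟨(i, j), h⟩

/-- The defining ideal of the ring `U^n`. -/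
noncomputable def uIdeal (n : ℕ) : Ideal (MvPolynomial {p : Fin n × Fin n // p.1 ≠ p.2} ℚ) :=
  Ideal.span { q | (∃ (i j : Fin n) (h : i ≠ j), q = uVar i j h * uVar i j h)
    ∨ (∃ (i j : Fin n) (h : i ≠ j), q = uVar i j h + uVar j i h.symm)
    ∨ (∃ (i j k : Fin n) (hij : i ≠ j) (hjk : j ≠ k) (hki : k ≠ i),
        q = uVar i j hij * uVar j k hjk + uVar j k hjk * uVar k i hki
          + uVar k i hki * uVar i j hij) }

/-- The ring `U^n = ℚ[u_{ij} : i ≠ j] / I`. -/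
abbrev URing (n : ℕ) := MvPolynomial {p : Fin n × Fin n // p.1 ≠ p.2} ℚ ⧸ uIdeal n

noncomputable def u {n : ℕ} (i j : Fin n) (h : i ≠ j) : URing n :=
  Ideal.Quotient.mk (uIdeal n) (uVar i j h)

noncomputable def v {n : ℕ} (i j k : Fin n) (hij : i ≠ j) (hjk : j ≠ k) (hki : k ≠ i) :
    URing n :=
  u i j hij + u j k hjk + u k i hki


lemma u_sq {n : ℕ} (i j : Fin n) (h : i ≠ j) : u i j h * u i j h = 0 := by
  unfold u
  rw [← map_mul]
  exact Ideal.Quotient.eq_zero_iff_mem.mpr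
    (Ideal.subset_span (Or.inl ⟨i, j, h, rfl⟩))

lemma u_skew {n : ℕ} (i j : Fin n) (h : i ≠ j) : u j i h.symm = - u i j h := by
  have h0 : u i j h + u j i h.symm = 0 := by
    unfold u
    rw [← map_add]
    exact Ideal.Quotient.eq_zero_iff_mem.mpr
      (Ideal.subset_span (Or.inr (Or.inl ⟨i, j, h, rfl⟩)))
  exact eq_neg_of_add_eq_zero_right h0

lemma u_cyc {n : ℕ} (i j k : Fin n) (hij : i ≠ j) (hjk : j ≠ k) (hki : k ≠ i) :
    u i j hij * u j k hjk + u j k hjk * u k i hki + u k i hki * u i j hij = 0 := by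
  unfold u
  rw [← map_mul, ← map_mul, ← map_mul, ← map_add, ← map_add]
  exact Ideal.Quotient.eq_zero_iff_mem.mpr
    (Ideal.subset_span (Or.inr (Or.inr ⟨i, j, k, hij, hjk, hki, rfl⟩)))

/-- For four distinct indices `i, j, k, ℓ`, the elements `v` satisfy the three-term
cyclic relation `v_{ijℓ} v_{jkℓ} + v_{jkℓ} v_{kiℓ} + v_{kiℓ} v_{ijℓ} = 0`. -/
theorem v_cyclic_relation (n : ℕ) (i j k l : Fin n)
    (hij : i ≠ j) (hik : i ≠ k) (hil : i ≠ l)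
    (hjk : j ≠ k) (hjl : j ≠ l) (hkl : k ≠ l) :
    v i j l hij hjl hil.symm * v j k l hjk hkl hjl.symm
      + v j k l hjk hkl hjl.symm * v k i l hik.symm hil hkl.symm
      + v k i l hik.symm hil hkl.symm * v i j l hij hjl hil.symm = 0 := by
  have C1 := u_cyc i j k hij hjk hik.symm
  have C2 := u_cyc i j l hij hjl hil.symm
  have C4 := u_cyc j k l hjk hkl hjl.symm
  have C5 := u_cyc k i l hik.symm hil hkl.symm
  have S1 := u_sq i l hil
  have S2 := u_sq j l hjl
  have S3 := u_sq k l hkl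
  simp only [v, u_skew i l hil, u_skew j l hjl, u_skew k l hkl] at C2 C4 C5 ⊢
  linear_combination C1 - S1 - S2 - S3 - C2 - C4 - C5
end

section
/- The Q-algebra map φ: Q[u_{ij} : 1 ≤ i ≠ j ≤ n−1] → Q[u_{ij} : 1 ≤ i ≠ j ≤ n] sending u_{ij} to v_{ijn} := u_{ij} + u_{jn} + u_{ni} descends to a well-defined Q-algebra homomorphism φ̄: U^{n−1} → U^n, i.e., φ maps each generator of the defining ideal of U^{n−1} into the defining ideal of U^n. -/
open MvPolynomial

/-- The algebra map `φ : ℚ[u_{ij} : i ≠ j ≤ n-1] → ℚ[u_{ij} : i ≠ j ≤ n]`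
sending `u_{ij} ↦ v_{ijn} = u_{ij} + u_{jn} + u_{ni}` (here with `n-1` replaced by `n`
and `n` by `n+1`, so the last index plays the role of `n`). -/
noncomputable def phiMap (n : ℕ) :
    MvPolynomial {p : Fin n × Fin n // p.1 ≠ p.2} ℚ →ₐ[ℚ]
      MvPolynomial {p : Fin (n + 1) × Fin (n + 1) // p.1 ≠ p.2} ℚ :=
  aeval fun q =>
    uVar (Fin.castSucc q.1.1) (Fin.castSucc q.1.2)
        (fun h => q.2 (Fin.castSucc_injective n h))
      + uVar (Fin.castSucc q.1.2) (Fin.last n) (Fin.castSucc_lt_last _).ne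
      + uVar (Fin.last n) (Fin.castSucc q.1.1) (Fin.castSucc_lt_last _).ne'

lemma uq_sq {m : ℕ} (i j : Fin m) (h : i ≠ j) : u i j h * u i j h = 0 := by
  rw [u, ← map_mul, Ideal.Quotient.eq_zero_iff_mem]
  exact Ideal.subset_span (Or.inl ⟨i, j, h, rfl⟩)

lemma uq_anti {m : ℕ} (i j : Fin m) (h : i ≠ j) : u i j h + u j i h.symm = 0 := by
  rw [u, u, ← map_add, Ideal.Quotient.eq_zero_iff_mem]
  exact Ideal.subset_span (Or.inr (Or.inl ⟨i, j, h, rfl⟩))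

lemma uq_tri {m : ℕ} (i j k : Fin m) (hij : i ≠ j) (hjk : j ≠ k) (hki : k ≠ i) :
    u i j hij * u j k hjk + u j k hjk * u k i hki + u k i hki * u i j hij = 0 := by
  simp only [u, ← map_mul, ← map_add, Ideal.Quotient.eq_zero_iff_mem]
  exact Ideal.subset_span (Or.inr (Or.inr ⟨i, j, k, hij, hjk, hki, rfl⟩))

lemma v_sq {m : ℕ} (i j l : Fin m) (hij : i ≠ j) (hjl : j ≠ l) (hli : l ≠ i) :
    (u i j hij + u j l hjl + u l i hli) * (u i j hij + u j l hjl + u l i hli) = 0 := by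
  linear_combination uq_sq i j hij + uq_sq j l hjl + uq_sq l i hli + 2 * uq_tri i j l hij hjl hli

lemma v_anti {m : ℕ} (i j l : Fin m) (hij : i ≠ j) (hjl : j ≠ l) (hil : i ≠ l) :
    (u i j hij + u j l hjl + u l i hil.symm)
      + (u j i hij.symm + u i l hil + u l j hjl.symm) = 0 := by
  linear_combination uq_anti i j hij + uq_anti j l hjl + uq_anti i l hil

lemma v_tri {m : ℕ} (i j k l : Fin m) (hij : i ≠ j) (hjk : j ≠ k) (hki : k ≠ i)
    (hil : i ≠ l) (hjl : j ≠ l) (hkl : k ≠ l) :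
    (u i j hij + u j l hjl + u l i hil.symm) * (u j k hjk + u k l hkl + u l j hjl.symm)
      + (u j k hjk + u k l hkl + u l j hjl.symm) * (u k i hki + u i l hil + u l k hkl.symm)
      + (u k i hki + u i l hil + u l k hkl.symm) * (u i j hij + u j l hjl + u l i hil.symm)
      = 0 := by
  have hP : u l i hil.symm = - u i l hil := by linear_combination uq_anti i l hil
  have hQ : u l j hjl.symm = - u j l hjl := by linear_combination uq_anti j l hjl
  have hR : u l k hkl.symm = - u k l hkl := by linear_combination uq_anti k l hkl
  have hB := uq_tri i j l hij hjl hil.symm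
  have hC := uq_tri j k l hjk hkl hjl.symm
  have hD := uq_tri k i l hki hil hkl.symm
  rw [hP, hQ, hR] at *
  linear_combination (-1 : URing m) * uq_sq i l hil - uq_sq j l hjl - uq_sq k l hkl
    + uq_tri i j k hij hjk hki - hB - hC - hD

/-- `φ` maps the defining ideal of `U^{n-1}` into the defining ideal of `U^n`,
hence descends to a well-defined algebra homomorphism `φ̄ : U^{n-1} → U^n`. -/
theorem phi_descends (n : ℕ) (hn : 2 ≤ n) :
    ∀ p ∈ uIdeal n, phiMap n p ∈ uIdeal (n + 1) := by
  have hle : uIdeal n ≤ (uIdeal (n + 1)).comap (phiMap n).toRingHom := by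
    rw [uIdeal, Ideal.span_le]
    rintro q (⟨i, j, h, rfl⟩ | ⟨i, j, h, rfl⟩ | ⟨i, j, k, hij, hjk, hki, rfl⟩) <;>
      (simp only [SetLike.mem_coe, Ideal.mem_comap];
       rw [← Ideal.Quotient.eq_zero_iff_mem];
       simp only [AlgHom.toRingHom_eq_coe, RingHom.coe_coe, phiMap, uVar, map_mul, map_add,
         aeval_X])
    · exact v_sq (Fin.castSucc i) (Fin.castSucc j) (Fin.last n)
        (fun hh => h (Fin.castSucc_injective n hh))
        (Fin.castSucc_lt_last _).ne (Fin.castSucc_lt_last _).ne'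
    · exact v_anti (Fin.castSucc i) (Fin.castSucc j) (Fin.last n)
        (fun hh => h (Fin.castSucc_injective n hh))
        (Fin.castSucc_lt_last _).ne (Fin.castSucc_lt_last _).ne
    · exact v_tri (Fin.castSucc i) (Fin.castSucc j) (Fin.castSucc k) (Fin.last n)
        (fun hh => hij (Fin.castSucc_injective n hh))
        (fun hh => hjk (Fin.castSucc_injective n hh))
        (fun hh => hki (Fin.castSucc_injective n hh))
        (Fin.castSucc_lt_last _).ne (Fin.castSucc_lt_last _).ne (Fin.castSucc_lt_last _).ne
  exact fun p hp => hle hp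
end

section
/- The composite ψ̄ ∘ φ̄ is the identity map on U^{n−1}, where φ̄: U^{n−1} → U^n sends u_{ij} to v_{ijn} = u_{ij} + u_{jn} + u_{ni}, and ψ̄: U^n → U^{n−1} sends u_{ij} to u_{ij} if i, j ≤ n−1 and to 0 otherwise. Consequently, φ̄ is injective. -/
open MvPolynomial

/-- The algebra map `ψ` sending `u_{ij} ↦ u_{ij}` if `i, j < n` (the last index), and
`u_{ij} ↦ 0` if `i` or `j` equals the last index. -/
noncomputable def psiMap (n : ℕ) :
    MvPolynomial {p : Fin (n + 1) × Fin (n + 1) // p.1 ≠ p.2} ℚ →ₐ[ℚ]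
      MvPolynomial {p : Fin n × Fin n // p.1 ≠ p.2} ℚ :=
  aeval fun q =>
    if h : q.1.1 ≠ Fin.last n ∧ q.1.2 ≠ Fin.last n then
      uVar (q.1.1.castPred h.1) (q.1.2.castPred h.2)
        (fun he => q.2 (by
          have h2 := congrArg Fin.castSucc he
          rwa [Fin.castSucc_castPred, Fin.castSucc_castPred] at h2))
    else 0

lemma castPred_ne {n : ℕ} {i j : Fin (n + 1)} (h : i ≠ j) (hi : i ≠ Fin.last n)
    (hj : j ≠ Fin.last n) : i.castPred hi ≠ j.castPred hj := fun he => h (by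
  have h2 := congrArg Fin.castSucc he
  rwa [Fin.castSucc_castPred, Fin.castSucc_castPred] at h2)

lemma psiMap_X {n : ℕ} (i j : Fin (n + 1)) (h : i ≠ j) :
    psiMap n (uVar i j h) =
      if h' : i ≠ Fin.last n ∧ j ≠ Fin.last n then
        uVar (i.castPred h'.1) (j.castPred h'.2) (castPred_ne h h'.1 h'.2)
      else 0 := by
  rw [psiMap, uVar, aeval_X]

lemma psiMap_X_pos {n : ℕ} (i j : Fin (n + 1)) (h : i ≠ j) (hi : i ≠ Fin.last n)
    (hj : j ≠ Fin.last n) (h' : i.castPred hi ≠ j.castPred hj) :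
    psiMap n (uVar i j h) = uVar (i.castPred hi) (j.castPred hj) h' := by
  rw [psiMap_X, dif_pos ⟨hi, hj⟩]

lemma psiMap_X_zero {n : ℕ} (i j : Fin (n + 1)) (h : i ≠ j)
    (hij : i = Fin.last n ∨ j = Fin.last n) :
    psiMap n (uVar i j h) = 0 := by
  rw [psiMap_X, dif_neg]
  tauto

lemma psi_phi_X {n : ℕ} (q : {p : Fin n × Fin n // p.1 ≠ p.2}) :
    psiMap n (phiMap n (X q)) = X q := by
  rw [phiMap, aeval_X, map_add, map_add,
    psiMap_X_zero _ _ _ (Or.inr rfl), psiMap_X_zero _ _ _ (Or.inl rfl),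
    psiMap_X_pos _ _ _ (Fin.castSucc_lt_last _).ne (Fin.castSucc_lt_last _).ne
      (by simpa [Fin.castPred_castSucc] using q.2)]
  simp [uVar, Fin.castPred_castSucc]

lemma psi_phi_eq {n : ℕ} (p : MvPolynomial {p : Fin n × Fin n // p.1 ≠ p.2} ℚ) :
    psiMap n (phiMap n p) = p := by
  have h : (psiMap n).comp (phiMap n) = AlgHom.id ℚ _ :=
    MvPolynomial.algHom_ext fun q => by simpa using psi_phi_X q
  simpa using congrArg (fun f => f p) (congrArg DFunLike.coe h)

/-- The composite `ψ̄ ∘ φ̄` is the identity of `U^{n-1}` (expressed at the level of the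
polynomial rings modulo the defining ideal), and consequently `φ̄` is injective. -/
theorem psi_comp_phi_eq_id (n : ℕ) (hn : 2 ≤ n) :
    (∀ p : MvPolynomial {p : Fin n × Fin n // p.1 ≠ p.2} ℚ,
        psiMap n (phiMap n p) - p ∈ uIdeal n) ∧
    (∀ p : MvPolynomial {p : Fin n × Fin n // p.1 ≠ p.2} ℚ,
        phiMap n p ∈ uIdeal (n + 1) → p ∈ uIdeal n) := by
  constructor
  · intro p
    rw [psi_phi_eq, sub_self]
    exact Ideal.zero_mem _
  · intro p hp
    have hsub : uIdeal (n + 1) ≤ Ideal.comap (psiMap n).toRingHom (uIdeal n) := by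
      rw [uIdeal, Ideal.span_le]
      rintro q (⟨i, j, h, rfl⟩ | ⟨i, j, h, rfl⟩ | ⟨i, j, k, hij, hjk, hki, rfl⟩) <;>
        rw [SetLike.mem_coe, Ideal.mem_comap]
      · by_cases hi : i = Fin.last n
        · simp [map_mul, psiMap_X_zero i j h (Or.inl hi)]
        · by_cases hj : j = Fin.last n
          · simp [map_mul, psiMap_X_zero i j h (Or.inr hj)]
          · rw [AlgHom.toRingHom_eq_coe, RingHom.coe_coe, map_mul,
              psiMap_X_pos i j h hi hj (castPred_ne h hi hj)]
            exact Ideal.subset_span (Or.inl ⟨_, _, _, rfl⟩)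
      · by_cases hi : i = Fin.last n
        · simp [psiMap_X_zero i j h (Or.inl hi), psiMap_X_zero j i h.symm (Or.inr hi)]
        · by_cases hj : j = Fin.last n
          · simp [psiMap_X_zero i j h (Or.inr hj), psiMap_X_zero j i h.symm (Or.inl hj)]
          · rw [AlgHom.toRingHom_eq_coe, RingHom.coe_coe, map_add,
              psiMap_X_pos i j h hi hj (castPred_ne h hi hj),
              psiMap_X_pos j i h.symm hj hi (castPred_ne h.symm hj hi)]
            exact Ideal.subset_span (Or.inr (Or.inl ⟨_, _, _, rfl⟩))
      · by_cases hi : i = Fin.last n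
        · simp [map_mul, psiMap_X_zero i j hij (Or.inl hi),
            psiMap_X_zero k i hki (Or.inr hi)]
        · by_cases hj : j = Fin.last n
          · simp [map_mul, psiMap_X_zero i j hij (Or.inr hj),
              psiMap_X_zero j k hjk (Or.inl hj)]
          · by_cases hk : k = Fin.last n
            · simp [map_mul, psiMap_X_zero j k hjk (Or.inr hk),
                psiMap_X_zero k i hki (Or.inl hk)]
            · rw [AlgHom.toRingHom_eq_coe, RingHom.coe_coe, map_add, map_add,
                map_mul, map_mul, map_mul,
                psiMap_X_pos i j hij hi hj (castPred_ne hij hi hj),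
                psiMap_X_pos j k hjk hj hk (castPred_ne hjk hj hk),
                psiMap_X_pos k i hki hk hi (castPred_ne hki hk hi)]
              exact Ideal.subset_span (Or.inr (Or.inr ⟨_, _, _, _, _, _, rfl⟩))
    have := hsub hp
    rw [Ideal.mem_comap] at this
    simpa [psi_phi_eq] using this
end

section
/- Fix p ∈ R^3 identified with a non-identity element of SU(2) (via R^3 ≅ SU(2) \ {1}), with |p| > 1. The self-map ψ_p of the unit sphere S^2 ⊂ R^3 defined by ψ_p(v) = (p^{-1}·v − p^{-1}·0)/|p^{-1}·v − p^{-1}·0| (where · denotes the SU(2) group operation transported to R^3 ∪ {∞} ≅ SU(2), and subtraction and norm are those of R^3) is homotopic to the identity map of S^2, hence has degree one. -/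
/-!
Push `p` out along its ray to `∞`, which `e` sends to `1 ∈ G`. At every point `q` of the ray,
`x ↦ q⁻¹ · x` is a bijection of `ℝ³ ∪ {∞}` sending only `q` to `∞`; as `q` stays outside the
closed unit ball, `q⁻¹ · v` and `q⁻¹ · 0` are distinct points of `ℝ³` for every `v ∈ S²`, so
their normalized difference is a homotopy from `ψ_p` to the map for `q = ∞`, which is `v ↦ v`.
-/

open scoped OnePoint
open OnePoint Filter Topology unitInterval

theorem Equiv.symm_inv_mul_eq_iff {X G : Type*} [Group G] (e : X ≃ G) {x₀ : X} (he : e x₀ = 1)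
    {q x : X} : e.symm ((e q)⁻¹ * e x) = x₀ ↔ x = q := by
  rw [Equiv.symm_apply_eq, he, inv_mul_eq_one, e.injective.eq_iff, eq_comm]

namespace OnePoint

section Ray

variable {E : Type*} [NormedAddCommGroup E] [NormedSpace ℝ E]

noncomputable def rayToInfty (p : E) (t : I) : OnePoint E :=
  if t = 1 then ∞ else ↑((1 - (t : ℝ))⁻¹ • p)

@[simp] theorem rayToInfty_zero (p : E) : rayToInfty p 0 = p := by
  simp [rayToInfty]

@[simp] theorem rayToInfty_one (p : E) : rayToInfty p 1 = ∞ := by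
  simp [rayToInfty]

theorem continuous_rayToInfty {p : E} (hp : p ≠ 0) : Continuous (rayToInfty p) := by
  have hpos : ∀ s : I, s ≠ 1 → 0 < 1 - (s : ℝ) := fun s hs =>
    sub_pos.2 (unitInterval.lt_one_iff_ne_one.2 hs)
  have hne : ∀ s ∈ ({1}ᶜ : Set I), rayToInfty p s = ↑((1 - (s : ℝ))⁻¹ • p) :=
    fun s hs => if_neg hs
  refine continuous_iff_continuousAt.2 fun t => ?_
  rcases eq_or_ne t 1 with rfl | ht
  · rw [← continuousWithinAt_compl_self, ContinuousWithinAt, rayToInfty_one,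
      tendsto_congr' (eventually_nhdsWithin_of_forall hne)]
    refine tendsto_coe_infty.comp (tendsto_norm_atTop_iff_cobounded.1 ?_ |>.mono_right
      (Metric.cobounded_le_cocompact.trans cocompact_le_coclosedCompact))
    have h_gap : Tendsto (fun s : I => 1 - (s : ℝ)) (𝓝[≠] 1) (𝓝[>] 0) :=
      tendsto_nhdsWithin_iff.2 ⟨tendsto_nhdsWithin_of_tendsto_nhds
        ((by fun_prop : Continuous fun s : I => 1 - (s : ℝ)).tendsto' 1 0 (by simp)),
        eventually_nhdsWithin_of_forall hpos⟩
    refine ((tendsto_inv_nhdsGT_zero.comp h_gap).atTop_mul_const (norm_pos_iff.2 hp)).congr'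
      (eventually_nhdsWithin_of_forall fun s hs => ?_)
    simp [norm_smul, abs_of_pos (hpos s hs)]
  · have hon : ContinuousOn (rayToInfty p) {1}ᶜ :=
      (continuous_coe.comp_continuousOn (ContinuousOn.smul (ContinuousOn.inv₀ (by fun_prop)
        fun s hs => (hpos s hs).ne') continuousOn_const)).congr hne
    exact hon.continuousAt (isOpen_compl_singleton.mem_nhds ht)

theorem rayToInfty_ne_coe {p x : E} (hx : ‖x‖ < ‖p‖) (t : I) : rayToInfty p t ≠ x := by
  intro h
  unfold rayToInfty at h
  split_ifs at h with ht
  · exact infty_ne_coe x h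
  have hpos : 0 < 1 - (t : ℝ) := sub_pos.2 (unitInterval.lt_one_iff_ne_one.2 ht)
  rw [← coe_injective h, norm_smul, Real.norm_of_nonneg (inv_pos.2 hpos).le] at hx
  exact hx.not_ge (le_mul_of_one_le_left (norm_nonneg p)
    ((one_le_inv₀ hpos).2 (by linarith [t.2.1])))

end Ray

theorem exists_continuous_lift {X Y : Type*} [TopologicalSpace X] [TopologicalSpace Y]
    {f : X → OnePoint Y} (hf : Continuous f) (h : ∀ x, f x ≠ ∞) :
    ∃ g : X → Y, Continuous g ∧ (↑) ∘ g = f := by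
  choose g hg using fun x => ne_infty_iff_exists.1 (h x)
  have hgf : (↑) ∘ g = f := funext hg
  exact ⟨g, isOpenEmbedding_coe.isEmbedding.continuous_iff.2 (hgf ▸ hf), hgf⟩

theorem exists_continuous_normalize_sub {E X : Type*} [NormedAddCommGroup E] [NormedSpace ℝ E]
    [TopologicalSpace X] {a b : X → OnePoint E} (ha : Continuous a) (hb : Continuous b)
    (ha_ne : ∀ x, a x ≠ ∞) (hb_ne : ∀ x, b x ≠ ∞) (hab : ∀ x, a x ≠ b x) :
    ∃ H : C(X, Metric.sphere (0 : E) 1), ∀ x, ∃ a' b' : E, a x = a' ∧ b x = b' ∧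
      (H x : E) = ‖a' - b'‖⁻¹ • (a' - b') := by
  obtain ⟨a', ha', rfl⟩ := exists_continuous_lift ha ha_ne
  obtain ⟨b', hb', rfl⟩ := exists_continuous_lift hb hb_ne
  have hsub : ∀ x, a' x - b' x ≠ 0 := fun x => sub_ne_zero.2 fun h => hab x (by simp [h])
  refine ⟨⟨fun x => ⟨‖a' x - b' x‖⁻¹ • (a' x - b' x), ?_⟩, ?_⟩,
    fun x => ⟨a' x, b' x, rfl, rfl, rfl⟩⟩
  · simpa using norm_smul_inv_norm (𝕜 := ℝ) (hsub x)
  · exact (((ha'.sub hb').norm.inv₀ fun x => norm_ne_zero_iff.2 (hsub x)).smul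
      (ha'.sub hb')).subtype_mk _

end OnePoint

attribute [local fun_prop] Homeomorph.continuous_symm OnePoint.continuous_coe

/-- Identify `SU(2) ≅ S³` with the one-point compactification `ℝ³ ∪ {∞}` via a
homeomorphism `e` sending `∞` to the identity element `1` (so `ℝ³ ≅ SU(2) \ {1}`).
Fix `p ∈ ℝ³` with `|p| > 1`. Then the self-map `ψ_p` of the unit sphere `S² ⊂ ℝ³`
defined by `ψ_p(v) = (p⁻¹·v − p⁻¹·0)/|p⁻¹·v − p⁻¹·0|` (where `·` is the group
operation of `G = SU(2)` transported to `ℝ³ ∪ {∞}` via `e`, and the subtraction and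
norm are those of `ℝ³`) is homotopic to the identity map of `S²` (hence has degree one).
Stated for an arbitrary topological group `G` in place of `SU(2)`. -/
theorem psi_p_homotopic_id {G : Type*} [TopologicalSpace G] [Group G]
    [IsTopologicalGroup G]
    (e : OnePoint (EuclideanSpace ℝ (Fin 3)) ≃ₜ G) (he : e ∞ = 1)
    (p : EuclideanSpace ℝ (Fin 3)) (hp : 1 < ‖p‖)
    (ψ : C(Metric.sphere (0 : EuclideanSpace ℝ (Fin 3)) 1,
          Metric.sphere (0 : EuclideanSpace ℝ (Fin 3)) 1))
    (hψ : ∀ (v : EuclideanSpace ℝ (Fin 3))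
        (hv : v ∈ Metric.sphere (0 : EuclideanSpace ℝ (Fin 3)) 1)
        (a b : EuclideanSpace ℝ (Fin 3)),
        e.symm ((e (OnePoint.some p))⁻¹ * e (OnePoint.some v)) = OnePoint.some a →
        e.symm ((e (OnePoint.some p))⁻¹
            * e (OnePoint.some (0 : EuclideanSpace ℝ (Fin 3)))) = OnePoint.some b →
        ((ψ ⟨v, hv⟩ : Metric.sphere (0 : EuclideanSpace ℝ (Fin 3)) 1)
            : EuclideanSpace ℝ (Fin 3))
          = ‖a - b‖⁻¹ • (a - b)) :
    ψ.Homotopic (ContinuousMap.id _) := by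
  have hp0 : p ≠ 0 := norm_pos_iff.1 (one_pos.trans hp)
  have hray := continuous_rayToInfty hp0
  have htrans_ne_infty : ∀ (t : I) (x : EuclideanSpace ℝ (Fin 3)), ‖x‖ < ‖p‖ →
      e.symm ((e (rayToInfty p t))⁻¹ * e x) ≠ ∞ := fun t x hx h =>
    rayToInfty_ne_coe hx t ((e.toEquiv.symm_inv_mul_eq_iff he).1 h).symm
  obtain ⟨H, hH⟩ := exists_continuous_normalize_sub
    (a := fun x : I × Metric.sphere (0 : EuclideanSpace ℝ (Fin 3)) 1 =>
      e.symm ((e (rayToInfty p x.1))⁻¹ * e x.2))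
    (b := fun x => e.symm ((e (rayToInfty p x.1))⁻¹ * e (0 : EuclideanSpace ℝ (Fin 3))))
    (by fun_prop) (by fun_prop)
    (fun x => htrans_ne_infty x.1 x.2 (by simp [hp]))
    (fun x => htrans_ne_infty x.1 0 (by simpa using hp0))
    (fun x => by simpa using ne_zero_of_mem_unit_sphere x.2)
  refine ⟨⟨H, fun v => ?_, fun v => ?_⟩⟩
  · obtain ⟨a, b, ha, hb, hHv⟩ := hH (0, v)
    exact Subtype.ext (hHv.trans (hψ v v.2 a b (by simpa using ha) (by simpa using hb)).symm)
  · obtain ⟨a, b, ha, hb, hHv⟩ := hH (1, v)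
    simp only [rayToInfty_one, he, inv_one, one_mul, Homeomorph.symm_apply_apply] at ha hb
    obtain rfl := coe_injective ha
    obtain rfl := coe_injective hb
    exact Subtype.ext (by simpa using hHv)
end
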